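/- Let I ⊆ (0,∞) be an open interval and let g : ℝ → ℝ be differentiable on I with g(h) > 0 for all h ∈ I. If g satisfies the differential equation h · g'(h) = g(h) · (1 - g(h)) for all h ∈ I, then there exists a real number μ such that g(h) · (h - μ) = h for all h ∈ I (equivalently, g(h) = 1/(1 - μ/h)). -/
import Mathlib


/-- The positive solutions on an open interval `I ⊆ (0,∞)` of the ODE
`h * g'(h) = g(h) * (1 - g(h))` are of the form `g(h) = 1/(1 - μ/h)`,
i.e. `g(h) * (h - μ) = h`, for some constant `μ`. -/
theorem hilbert_droste_ode_solution (a b : ℝ) (hI : Set.Ioo a b ⊆ Set.Ioi (0 : ℝ))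
    (g : ℝ → ℝ)
    (hdiff : ∀ h ∈ Set.Ioo a b, DifferentiableAt ℝ g h)
    (hpos : ∀ h ∈ Set.Ioo a b, 0 < g h)
    (hode : ∀ h ∈ Set.Ioo a b, h * deriv g h = g h * (1 - g h)) :
    ∃ μ : ℝ, ∀ h ∈ Set.Ioo a b, g h * (h - μ) = h := by
  rcases Set.eq_empty_or_nonempty (Set.Ioo a b) with he | ⟨h₀, hh₀⟩
  · exact ⟨0, fun h hh => absurd hh (by simp [he])⟩
  set F : ℝ → ℝ := fun h => h - h / g h with hF
  have hFderiv : ∀ h ∈ Set.Ioo a b, HasDerivAt F 0 h := by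
    intro h hh
    have hg := hpos h hh
    have hgne : g h ≠ 0 := ne_of_gt hg
    have hd := hdiff h hh
    have h1 : HasDerivAt (fun x : ℝ => x / g x)
        ((1 * g h - h * deriv g h) / (g h) ^ 2) h :=
      (hasDerivAt_id h).div (hd.hasDerivAt) hgne
    have h2 : (1 * g h - h * deriv g h) / (g h) ^ 2 = 1 := by
      rw [hode h hh]
      field_simp
      ring
    have h3 : HasDerivAt F (1 - 1) h := (hasDerivAt_id h).sub (h2 ▸ h1)
    simpa using h3
  have hFdiffOn : DifferentiableOn ℝ F (Set.Ioo a b) :=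
    fun h hh => ((hFderiv h hh).differentiableAt).differentiableWithinAt
  have hconst : ∀ h ∈ Set.Ioo a b, F h = F h₀ := by
    intro h hh
    apply (convex_Ioo a b).is_const_of_fderivWithin_eq_zero hFdiffOn _ hh hh₀
    intro x hx
    rw [fderivWithin_of_isOpen isOpen_Ioo hx, (hFderiv x hx).hasFDerivAt.fderiv]
    ext y
    simp
  refine ⟨F h₀, fun h hh => ?_⟩
  have hgne : g h ≠ 0 := ne_of_gt (hpos h hh)
  have hc : h - h / g h = F h₀ := hconst h hh
  have h4 : h - F h₀ = h / g h := by linarith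
  rw [h4]
  field_simp
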